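/- arXiv:2508.01756 — 3 statements merged into one kernel-verified Lean document; each statement's English description precedes it below -/
import Mathlib

section
/- Let γ be a coupling whose support is c-monotone for the cost c(x,y) = h(|x−y|) with h decreasing, h = 1/r on [δ,∞), h ≤ 1/r on [0,δ). Suppose there exist (x,y) ∈ supp γ with |x−y| ≤ δ and (w,z) ∈ supp γ with |w−y| ≥ r₀ and |x−z| ≥ r₀ for some r₀ > 2δ. Then we reach a contradiction; i.e., no such quadruple of points can exist. -/
open MeasureTheory Metric Set

/-- The (topological) support of a measure. -/
def msupport {X : Type*} [TopologicalSpace X] [MeasurableSpace X] (γ : Measure X) : Set X :=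
  {z | ∀ U : Set X, IsOpen U → z ∈ U → 0 < γ U}

/-- No quadruple `(x,y), (w,z)` in the `c`-monotone support of a coupling can
satisfy `|x−y| ≤ δ`, `|w−y| ≥ r₀`, `|x−z| ≥ r₀` with `r₀ > 2δ`, for the cost
`c(x,y) = h(|x−y|)` with `h` decreasing, `= 1/r` on `[δ,∞)`, `≤ 1/r` below. -/
theorem no_close_pair_in_monotone_support (d : ℕ)
    (δ r₀ : ℝ) (hδ : 0 < δ) (hr₀ : 2 * δ < r₀)
    (h : ℝ → EReal)
    (hmono : AntitoneOn h (Ici 0))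
    (heq : ∀ r : ℝ, δ ≤ r → h r = ((1 / r : ℝ) : EReal))
    (hle : ∀ r : ℝ, 0 < r → r < δ → h r ≤ ((1 / r : ℝ) : EReal))
    (γ : Measure (EuclideanSpace ℝ (Fin d) × EuclideanSpace ℝ (Fin d)))
    (hcmono : ∀ p ∈ msupport γ, ∀ q ∈ msupport γ,
      h (dist p.1 p.2) + h (dist q.1 q.2) ≤ h (dist q.1 p.2) + h (dist p.1 q.2))
    (x y w z : EuclideanSpace ℝ (Fin d))
    (hxy : (x, y) ∈ msupport γ) (hwz : (w, z) ∈ msupport γ)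
    (hclose : dist x y ≤ δ) (hwy : r₀ ≤ dist w y) (hxz : r₀ ≤ dist x z) :
    False := by
  have hr0pos : (0:ℝ) < r₀ := by linarith
  have hδr0 : δ ≤ r₀ := by linarith
  have key := hcmono (x,y) hxy (w,z) hwz
  simp only at key
  have h1 : ((1/δ : ℝ) : EReal) ≤ h (dist x y) := by
    rw [← heq δ le_rfl]
    exact hmono (mem_Ici.2 dist_nonneg) (mem_Ici.2 hδ.le) hclose
  have h2 : (0 : EReal) ≤ h (dist w z) := by
    have hd := dist_nonneg (x := w) (y := z)
    have := hmono (mem_Ici.2 hd) (mem_Ici.2 (by linarith : (0:ℝ) ≤ dist w z + δ))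
      (by linarith)
    rw [heq _ (by linarith)] at this
    refine le_trans ?_ this
    exact_mod_cast (by positivity : (0:ℝ) ≤ 1/(dist w z + δ))
  have h3 : h (dist w y) ≤ ((1/r₀ : ℝ) : EReal) := by
    rw [heq _ (hδr0.trans hwy)]
    exact_mod_cast one_div_le_one_div_of_le hr0pos hwy
  have h4 : h (dist x z) ≤ ((1/r₀ : ℝ) : EReal) := by
    rw [heq _ (hδr0.trans hxz)]
    exact_mod_cast one_div_le_one_div_of_le hr0pos hxz
  have hL : ((1/δ : ℝ) : EReal) ≤ h (dist x y) + h (dist w z) := by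
    calc ((1/δ:ℝ):EReal) = ((1/δ:ℝ):EReal) + 0 := (add_zero _).symm
    _ ≤ _ := add_le_add h1 h2
  have hR : h (dist w y) + h (dist x z) ≤ ((2/r₀ : ℝ) : EReal) := by
    calc h (dist w y) + h (dist x z) ≤ ((1/r₀:ℝ):EReal) + ((1/r₀:ℝ):EReal) :=
      add_le_add h3 h4
    _ = ((2/r₀:ℝ):EReal) := by norm_cast; ring
  have hfin : ((1/δ:ℝ):EReal) ≤ ((2/r₀:ℝ):EReal) := hL.trans (key.trans hR)
  rw [EReal.coe_le_coe_iff] at hfin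
  rw [div_le_div_iff₀ hδ hr0pos] at hfin
  linarith
end

section
/- Define h(r) = r³/δ⁴ − 2r²/δ³ + 2/δ for r ≤ δ and h(r) = 1/r for r > δ. Then h'' < 0 on the interval (2δ/3, ∞); in particular h' is strictly increasing there, and consequently the map y ↦ ∇_x c_δ(x,y) = h'(|x−y|)(x−y)/|x−y| is injective on {y : |y−x| > 2δ/3} for each fixed x ∈ ℝᵈ. -/
/-!
The two pieces of `h` and of their derivatives agree at `r = δ`, so `h'(r) = 3r²/δ⁴ − 4r/δ³` for
`r ≤ δ` and `h'(r) = −1/r²` for `r > δ`. The cubic piece increases on `(2δ/3, δ]`, where its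
difference quotients are `(3(a + b) − 4δ)/δ⁴ > 0`, the hyperbolic one on `[δ, ∞)`, and `h' < 0`
on `(0, ∞)`. For a negative strictly increasing `g`, the vector `(g(r)/r) • v` with `r = ‖v‖ > 0`
has norm `−g(r)`, which determines `r`, and then `v` itself.
-/

open Set

section Radial

variable {E : Type*} [NormedAddCommGroup E] [NormedSpace ℝ E]

theorem injOn_radial_smul {g : ℝ → ℝ} {S : Set ℝ} (hS : S ⊆ Ioi 0) (hg : StrictMonoOn g S)
    (hg_neg : ∀ r ∈ S, g r < 0) (x : E) :
    InjOn (fun y : E => (g ‖x - y‖ / ‖x - y‖) • (x - y)) {y : E | ‖y - x‖ ∈ S} := by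
  intro y₁ hy₁ y₂ hy₂ heq
  simp only [mem_ofPred_eq, norm_sub_rev y₁, norm_sub_rev y₂] at hy₁ hy₂
  have hpos₁ : 0 < ‖x - y₁‖ := hS hy₁
  have hpos₂ : 0 < ‖x - y₂‖ := hS hy₂
  have hnorm : |g ‖x - y₁‖| = |g ‖x - y₂‖| := by
    simpa only [norm_smul, Real.norm_eq_abs, abs_div, abs_norm,
      div_mul_cancel₀ _ hpos₁.ne', div_mul_cancel₀ _ hpos₂.ne'] using congrArg norm heq
  rw [abs_of_neg (hg_neg _ hy₁), abs_of_neg (hg_neg _ hy₂), neg_inj] at hnorm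
  have hr : ‖x - y₁‖ = ‖x - y₂‖ := hg.injOn hy₁ hy₂ hnorm
  simp only [hr] at heq
  have hc : g ‖x - y₂‖ / ‖x - y₂‖ ≠ 0 := div_ne_zero (hg_neg _ hy₂).ne hpos₂.ne'
  exact sub_right_injective (smul_right_injective E hc heq)

end Radial

namespace ModifiedCoulomb

variable {δ : ℝ}

noncomputable def profileDeriv (δ r : ℝ) : ℝ :=
  if r ≤ δ then 3 * r ^ 2 / δ ^ 4 - 4 * r / δ ^ 3 else -(r ^ 2)⁻¹

theorem hasDerivAt_cubic (δ r : ℝ) :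
    HasDerivAt (fun s => s ^ 3 / δ ^ 4 - 2 * s ^ 2 / δ ^ 3 + 2 / δ)
      (3 * r ^ 2 / δ ^ 4 - 4 * r / δ ^ 3) r := by
  have hsq := ((hasDerivAt_pow 2 r).const_mul 2).div_const (δ ^ 3)
  have hcube := (hasDerivAt_pow 3 r).div_const (δ ^ 4)
  refine ((hcube.sub hsq).add_const (2 / δ)).congr_deriv ?_
  push_cast
  ring

theorem cubic_self_eq_inv (hδ : δ ≠ 0) : δ ^ 3 / δ ^ 4 - 2 * δ ^ 2 / δ ^ 3 + 2 / δ = δ⁻¹ := by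
  field_simp
  norm_num

theorem cubicDeriv_self_eq (hδ : δ ≠ 0) : 3 * δ ^ 2 / δ ^ 4 - 4 * δ / δ ^ 3 = -(δ ^ 2)⁻¹ := by
  field_simp
  ring

theorem hasDerivAt_profileDeriv (hδ : 0 < δ) {h : ℝ → ℝ}
    (hdef₁ : ∀ r : ℝ, r ≤ δ → h r = r ^ 3 / δ ^ 4 - 2 * r ^ 2 / δ ^ 3 + 2 / δ)
    (hdef₂ : ∀ r : ℝ, δ < r → h r = 1 / r) (r : ℝ) :
    HasDerivAt h (profileDeriv δ r) r := by
  rcases lt_trichotomy r δ with hlt | hrδ | hgt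
  · have hev : (fun s => s ^ 3 / δ ^ 4 - 2 * s ^ 2 / δ ^ 3 + 2 / δ) =ᶠ[nhds r] h :=
      Filter.eventually_of_mem (Iio_mem_nhds hlt) fun s hs => (hdef₁ s (le_of_lt hs)).symm
    simpa only [profileDeriv, if_pos hlt.le] using
      (hasDerivAt_cubic δ r).congr_of_eventuallyEq hev.symm
  · subst r
    rw [profileDeriv, if_pos le_rfl, cubicDeriv_self_eq hδ.ne']
    have hleft : HasDerivWithinAt h (-(δ ^ 2)⁻¹) (Iic δ) δ := by
      rw [← cubicDeriv_self_eq hδ.ne']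
      exact (hasDerivAt_cubic δ δ).hasDerivWithinAt.congr (fun s hs => hdef₁ s hs)
        (hdef₁ δ le_rfl)
    have hright : HasDerivWithinAt h (-(δ ^ 2)⁻¹) (Ici δ) δ := by
      have hδ_val : h δ = δ⁻¹ := (hdef₁ δ le_rfl).trans (cubic_self_eq_inv hδ.ne')
      refine (hasDerivAt_inv hδ.ne').hasDerivWithinAt.congr (fun s hs => ?_) hδ_val
      rcases (mem_Ici.mp hs).eq_or_lt with rfl | hlt
      · exact hδ_val
      · rw [hdef₂ s hlt, one_div]
    have := hleft.union hright
    rwa [Iic_union_Ici, hasDerivWithinAt_univ] at this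
  · have hev : (fun s : ℝ => s⁻¹) =ᶠ[nhds r] h :=
      Filter.eventually_of_mem (Ioi_mem_nhds hgt) fun s hs => by rw [hdef₂ s hs, one_div]
    simpa only [profileDeriv, if_neg hgt.not_ge] using
      (hasDerivAt_inv (hδ.trans hgt).ne').congr_of_eventuallyEq hev.symm

theorem profileDeriv_neg (hδ : 0 < δ) {r : ℝ} (hr : 0 < r) : profileDeriv δ r < 0 := by
  unfold profileDeriv
  split_ifs with hrδ
  · have hcubic : 3 * r ^ 2 / δ ^ 4 - 4 * r / δ ^ 3 = -(r * (4 * δ - 3 * r) / δ ^ 4) := by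
      field_simp
      ring
    rw [hcubic, neg_neg_iff_pos]
    exact div_pos (mul_pos hr (by linarith)) (by positivity)
  · simp only [neg_neg_iff_pos]
    positivity

theorem strictMonoOn_profileDeriv (hδ : 0 < δ) :
    StrictMonoOn (profileDeriv δ) (Ioi (2 * δ / 3)) := by
  have hcubic : StrictMonoOn (profileDeriv δ) (Ioc (2 * δ / 3) δ) := by
    intro a ha b hb hab
    simp only [profileDeriv, if_pos ha.2, if_pos hb.2]
    have hdiff : (3 * b ^ 2 / δ ^ 4 - 4 * b / δ ^ 3) - (3 * a ^ 2 / δ ^ 4 - 4 * a / δ ^ 3)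
        = (b - a) * (3 * (a + b) - 4 * δ) / δ ^ 4 := by
      field_simp
      ring
    have hslope : 0 < (b - a) * (3 * (a + b) - 4 * δ) / δ ^ 4 :=
      div_pos (mul_pos (by linarith) (by linarith [ha.1, hb.1])) (by positivity)
    linarith
  have hhyperbolic : StrictMonoOn (profileDeriv δ) (Ici δ) := by
    intro a ha b hb hab
    have ha0 : 0 < a := hδ.trans_le ha
    rcases (mem_Ici.mp ha).eq_or_lt with rfl | haδ
    · simp only [profileDeriv, le_refl, if_true, if_neg hab.not_ge, cubicDeriv_self_eq hδ.ne']
      gcongr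
    · simp only [profileDeriv, if_neg haδ.not_ge, if_neg (haδ.trans hab).not_ge]
      gcongr
  rw [← Ioc_union_Ici_eq_Ioi (by linarith : 2 * δ / 3 < δ)]
  exact hcubic.union hhyperbolic (isGreatest_Ioc (by linarith)) isLeast_Ici

end ModifiedCoulomb

open ModifiedCoulomb in
/-- For the modified Coulomb profile `h`, the derivative `h'` is strictly
increasing on `(2δ/3, ∞)`; consequently, for each fixed `x`, the map
`y ↦ ∇_x c_δ(x,y) = h'(|x−y|) (x−y)/|x−y|` is injective on
`{y : |y−x| > 2δ/3}`. -/
theorem modified_coulomb_twist (d : ℕ) (δ : ℝ) (hδ : 0 < δ) (h : ℝ → ℝ)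
    (hdef₁ : ∀ r : ℝ, r ≤ δ → h r = r ^ 3 / δ ^ 4 - 2 * r ^ 2 / δ ^ 3 + 2 / δ)
    (hdef₂ : ∀ r : ℝ, δ < r → h r = 1 / r) :
    StrictMonoOn (deriv h) (Ioi (2 * δ / 3)) ∧
    ∀ x : EuclideanSpace ℝ (Fin d),
      Set.InjOn
        (fun y : EuclideanSpace ℝ (Fin d) =>
          (deriv h ‖x - y‖ / ‖x - y‖) • (x - y))
        {y : EuclideanSpace ℝ (Fin d) | 2 * δ / 3 < ‖y - x‖} := by
  have hderiv : deriv h = profileDeriv δ :=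
    funext fun r => (hasDerivAt_profileDeriv hδ hdef₁ hdef₂ r).deriv
  have hpos : Ioi (2 * δ / 3) ⊆ Ioi 0 := Ioi_subset_Ioi (by positivity)
  rw [hderiv]
  exact ⟨strictMonoOn_profileDeriv hδ, injOn_radial_smul hpos (strictMonoOn_profileDeriv hδ)
    (fun r hr => profileDeriv_neg hδ (hpos hr))⟩
end

section
/- Let c ∈ C²(ℝᵈ × ℝᵈ), let (x,y), (x',y') belong to a c-monotone set S, and suppose ‖D²_{yx}c + I‖ ≤ ε on a convex product set containing these points, where the mixed second derivative is evaluated along segments joining them. Then 0 ≥ −(x−x')·(y−y') − ε |x−x'| |y−y'|; equivalently, (x−x')·(y−y') ≥ −ε|x−x'||y−y'|. -/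
open Set

/-!
The double difference `c (x, y) - c (x, y') - c (x', y) + c (x', y')` is obtained from the mixed
derivative `D_y D_x c (x - x') (y - y')` by integrating over the unit square of the parametrisation
`(s, t) ↦ (x' + s • (x - x'), y' + t • (y - y'))`. Applying the mean value inequality once in `t` and
once in `s` to the derivative minus the constant `-⟪x - x', y - y'⟫` shows that the double difference
is within `ε ‖x - x'‖ ‖y - y'‖` of that constant, and `c`-monotonicity says it is nonpositive.
-/

theorem norm_sub_sub_le_of_norm_deriv_sub_le_segment_01 {G : Type*} [NormedAddCommGroup G]
    [NormedSpace ℝ G] {h h' : ℝ → G} {m : G} {K : ℝ}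
    (hd : ∀ t ∈ Icc (0 : ℝ) 1, HasDerivAt h (h' t) t)
    (hb : ∀ t ∈ Icc (0 : ℝ) 1, ‖h' t - m‖ ≤ K) :
    ‖h 1 - h 0 - m‖ ≤ K := by
  have hshifted := norm_image_sub_le_of_norm_deriv_le_segment_01' (f := fun t => h t - t • m)
    (fun t ht => ((hd t ht).sub ((hasDerivAt_id t).smul_const m)).hasDerivWithinAt)
    (fun t ht => by simpa using hb t (Ico_subset_Icc_self ht))
  convert hshifted using 2
  simp only [one_smul, zero_smul, sub_zero]
  abel

section Rectangle

variable {E F G : Type*} [NormedAddCommGroup E] [NormedSpace ℝ E]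
  [NormedAddCommGroup F] [NormedSpace ℝ F] [NormedAddCommGroup G] [NormedSpace ℝ G]

theorem HasFDerivAt.hasDerivAt_comp_add_smul {f : E → G} {f' : E →L[ℝ] G} {a u : E} {s : ℝ}
    (hf : HasFDerivAt f f' (a + s • u)) : HasDerivAt (fun s : ℝ => f (a + s • u)) (f' u) s := by
  have hline : HasDerivAt (fun s : ℝ => a + s • u) u s := by
    simpa using ((hasDerivAt_id s).smul_const u).const_add a
  exact hf.comp_hasDerivAt s hline

theorem ContDiff.differentiable_fderiv_partial_fst {c : E × F → G} (hc : ContDiff ℝ 2 c) (p : E) :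
    Differentiable ℝ fun y₀ : F => fderiv ℝ (fun x₀ => c (x₀, y₀)) p := by
  have hpartial : (fun y₀ : F => fderiv ℝ (fun x₀ => c (x₀, y₀)) p) =
      fun y₀ => (fderiv ℝ c (p, y₀)).comp (ContinuousLinearMap.inl ℝ E F) := by
    funext y₀
    exact ((hc.differentiable two_ne_zero (p, y₀)).hasFDerivAt.comp p
      (hasFDerivAt_prodMk_left p y₀)).fderiv
  rw [hpartial]
  exact ((hc.fderiv_right le_rfl).differentiable one_ne_zero).comp
    ((differentiable_const p).prodMk differentiable_id) |>.clm_comp (differentiable_const _)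

theorem norm_sub_sub_sub_add_sub_le_of_mixed_fderiv {c : E × F → G} (hc : ContDiff ℝ 2 c)
    {x x' : E} {y y' : F} {m : G} {K : ℝ}
    (hbound : ∀ s ∈ Icc (0 : ℝ) 1, ∀ t ∈ Icc (0 : ℝ) 1,
      ‖fderiv ℝ (fun y₀ => fderiv ℝ (fun x₀ => c (x₀, y₀)) (x' + s • (x - x')))
        (y' + t • (y - y')) (y - y') (x - x') - m‖ ≤ K) :
    ‖c (x, y) - c (x, y') - c (x', y) + c (x', y') - m‖ ≤ K := by
  have hdiff_x (y₀ : F) : Differentiable ℝ fun x₀ => c (x₀, y₀) :=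
    (hc.differentiable two_ne_zero).comp (differentiable_id.prodMk (differentiable_const y₀))
  have hinner : ∀ s ∈ Icc (0 : ℝ) 1,
      ‖fderiv ℝ (fun x₀ => c (x₀, y)) (x' + s • (x - x')) (x - x')
        - fderiv ℝ (fun x₀ => c (x₀, y')) (x' + s • (x - x')) (x - x') - m‖ ≤ K := by
    intro s hs
    simpa using norm_sub_sub_le_of_norm_deriv_sub_le_segment_01
      (fun t _ => (ContinuousLinearMap.apply ℝ G (x - x')).hasFDerivAt.comp_hasDerivAt t
        (hc.differentiable_fderiv_partial_fst _ _).hasFDerivAt.hasDerivAt_comp_add_smul)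
      (hbound s hs)
  have houter := norm_sub_sub_le_of_norm_deriv_sub_le_segment_01
    (fun s _ => ((hdiff_x y _).hasFDerivAt.hasDerivAt_comp_add_smul).sub
      ((hdiff_x y' _).hasFDerivAt.hasDerivAt_comp_add_smul)) hinner
  convert houter using 2
  simp only [Pi.sub_apply, one_smul, add_sub_cancel, zero_smul, add_zero, sub_left_inj]
  abel

end Rectangle

theorem quantitative_c_monotonicity_general (d : ℕ)
    (c : EuclideanSpace ℝ (Fin d) × EuclideanSpace ℝ (Fin d) → ℝ)
    (hc : ContDiff ℝ 2 c) (ε : ℝ)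
    (x x' y y' : EuclideanSpace ℝ (Fin d))
    (hmon : c (x, y) + c (x', y') ≤ c (x, y') + c (x', y))
    (hbound : ∀ s ∈ Icc (0 : ℝ) 1, ∀ t ∈ Icc (0 : ℝ) 1,
      ∀ u v : EuclideanSpace ℝ (Fin d),
        |fderiv ℝ (fun y₀ : EuclideanSpace ℝ (Fin d) =>
            fderiv ℝ (fun x₀ : EuclideanSpace ℝ (Fin d) => c (x₀, y₀))
              (x' + s • (x - x'))) (y' + t • (y - y')) v u
          + (inner ℝ u v : ℝ)| ≤ ε * ‖u‖ * ‖v‖) :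
    -(ε * ‖x - x'‖ * ‖y - y'‖) ≤ (inner ℝ (x - x') (y - y') : ℝ) := by
  have hrect := norm_sub_sub_sub_add_sub_le_of_mixed_fderiv hc (m := -inner ℝ (x - x') (y - y'))
    fun s hs t ht => by simpa using hbound s hs t ht (x - x') (y - y')
  rw [Real.norm_eq_abs, abs_le] at hrect
  linarith [hrect.1]

/-- Quantitative `c`-monotonicity: if `(x,y)` and `(x',y')` are `c`-monotone
(i.e. `c(x,y) + c(x',y') ≤ c(x,y') + c(x',y)`) and the mixed Hessian
`D²_{yx}c` is `ε`-close to `−I` along the segments joining the points, then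
`(x−x')·(y−y') ≥ −ε |x−x'| |y−y'|`. -/
theorem quantitative_c_monotonicity (d : ℕ)
    (c : EuclideanSpace ℝ (Fin d) × EuclideanSpace ℝ (Fin d) → ℝ)
    (hc : ContDiff ℝ 2 c) (ε : ℝ) (hε : 0 ≤ ε)
    (x x' y y' : EuclideanSpace ℝ (Fin d))
    (hmon : c (x, y) + c (x', y') ≤ c (x, y') + c (x', y))
    (hbound : ∀ s ∈ Icc (0 : ℝ) 1, ∀ t ∈ Icc (0 : ℝ) 1,
      ∀ u v : EuclideanSpace ℝ (Fin d),
        |fderiv ℝ (fun y₀ : EuclideanSpace ℝ (Fin d) =>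
            fderiv ℝ (fun x₀ : EuclideanSpace ℝ (Fin d) => c (x₀, y₀))
              (x' + s • (x - x'))) (y' + t • (y - y')) v u
          + (inner ℝ u v : ℝ)| ≤ ε * ‖u‖ * ‖v‖) :
    -(ε * ‖x - x'‖ * ‖y - y'‖) ≤ (inner ℝ (x - x') (y - y') : ℝ) :=
  quantitative_c_monotonicity_general d c hc ε x x' y y' hmon hbound
end
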